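/- arXiv:2312.04439 — 5 statements merged into one kernel-verified Lean document; each statement's English description precedes it below -/
import Mathlib

section
/- The reversion map rev : P_fin0(ℕ) → P_fin0(ℕ), X ↦ max X − X = {max X − x : x ∈ X}, satisfies rev(X + Y) = rev(X) + rev(Y) for all X, Y, and rev(rev(X)) = X; hence rev is a monoid automorphism of P_fin0(ℕ) of order 2. -/
open Pointwise

/-- The reduced power monoid `P_fin0(ℕ)`: finite subsets of ℕ containing 0,
under setwise (pointwise) addition. -/
def P0 : AddSubmonoid (Finset ℕ) where
  carrier := {X : Finset ℕ | (0 : ℕ) ∈ X}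
  add_mem' := fun hx hy => by simpa using Finset.add_mem_add hx hy
  zero_mem' := by simp [Finset.mem_zero]

/-- Maximum of a set in `P0`. -/
def mx (X : P0) : ℕ := X.1.max' ⟨0, X.2⟩

/-- The reversion map `X ↦ max X − X`. -/
def rev (X : P0) : P0 :=
  ⟨X.1.image (fun x => mx X - x),
    Finset.mem_image.mpr ⟨mx X, X.1.max'_mem ⟨0, X.2⟩, Nat.sub_self _⟩⟩

lemma le_mx (X : P0) {x : ℕ} (hx : x ∈ X.1) : x ≤ mx X := Finset.le_max' _ _ hx

lemma mx_mem (X : P0) : mx X ∈ X.1 := X.1.max'_mem _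

lemma coe_add (X Y : P0) : (X + Y).1 = X.1 + Y.1 := rfl

lemma mx_add (X Y : P0) : mx (X + Y) = mx X + mx Y := by
  apply le_antisymm
  · have h := mx_mem (X + Y)
    rw [coe_add, Finset.mem_add] at h
    obtain ⟨x, hx, y, hy, hxy⟩ := h
    rw [← hxy]
    exact Nat.add_le_add (le_mx X hx) (le_mx Y hy)
  · exact le_mx _ (by rw [coe_add]; exact Finset.add_mem_add (mx_mem X) (mx_mem Y))

lemma mx_rev (X : P0) : mx (rev X) = mx X := by
  apply le_antisymm
  · have h := mx_mem (rev X)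
    obtain ⟨x, hx, hxe⟩ := Finset.mem_image.mp h
    rw [← hxe]; exact Nat.sub_le _ _
  · exact le_mx _ (Finset.mem_image.mpr ⟨0, X.2, Nat.sub_zero _⟩)

/-- the reversion map is additive and involutive, hence a monoid
automorphism of P_fin0(ℕ) of order 2. -/
theorem stmt3 :
    (∀ X Y : P0, rev (X + Y) = rev X + rev Y) ∧
    (∀ X : P0, rev (rev X) = X) ∧
    rev ≠ id := by
  refine ⟨?_, ?_, ?_⟩
  · intro X Y
    apply Subtype.ext
    show (X + Y).1.image _ = (rev X).1 + (rev Y).1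
    ext a
    simp only [Finset.mem_image, coe_add, Finset.mem_add, rev]
    constructor
    · rintro ⟨z, ⟨x, hx, y, hy, rfl⟩, rfl⟩
      refine ⟨mx X - x, ⟨x, hx, rfl⟩, mx Y - y, ⟨y, hy, rfl⟩, ?_⟩
      rw [mx_add]
      have := le_mx X hx; have := le_mx Y hy
      omega
    · rintro ⟨_, ⟨x, hx, rfl⟩, _, ⟨y, hy, rfl⟩, rfl⟩
      refine ⟨x + y, ⟨x, hx, y, hy, rfl⟩, ?_⟩
      rw [mx_add]
      have := le_mx X hx; have := le_mx Y hy
      omega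
  · intro X
    apply Subtype.ext
    have : (rev (rev X)).1 = (rev X).1.image (fun x => mx (rev X) - x) := rfl
    rw [this, mx_rev]
    show ((X.1.image _).image _) = X.1
    rw [Finset.image_image]
    ext a
    simp only [Finset.mem_image, Function.comp]
    constructor
    · rintro ⟨x, hx, rfl⟩
      rwa [Nat.sub_sub_self (le_mx X hx)]
    · intro ha
      exact ⟨a, ha, Nat.sub_sub_self (le_mx X ha)⟩
  · intro h
    have hX : (0 : ℕ) ∈ ({0, 1, 3} : Finset ℕ) := by decide
    have h1 : rev ⟨{0, 1, 3}, hX⟩ = ⟨{0, 1, 3}, hX⟩ := congrFun h _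
    have hmx : mx ⟨{0, 1, 3}, hX⟩ = 3 := by
      refine le_antisymm (Finset.max'_le _ _ _ ?_) (Finset.le_max' _ _ ?_)
      · exact show ∀ y ∈ ({0,1,3}:Finset ℕ), y ≤ 3 by decide
      · exact show (3:ℕ) ∈ ({0,1,3}:Finset ℕ) by decide
    have h2 : (2 : ℕ) ∈ (rev ⟨{0, 1, 3}, hX⟩).1 :=
      Finset.mem_image.mpr ⟨1, show (1:ℕ) ∈ ({0,1,3}:Finset ℕ) by decide, by rw [hmx]⟩
    rw [h1] at h2
    exact absurd (show (2:ℕ) ∈ ({0,1,3}:Finset ℕ) from h2) (by decide)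
end

section
/- If A is a finite subset of ℕ containing 0 and B satisfies {0, max A} ⊆ B ⊆ A, then for all sufficiently large k ∈ ℕ, (k+1)A = kA + B, where kA denotes the k-fold sumset of A. -/
open Pointwise

lemma mem_nsmul_iff (A : Finset ℕ) (n : ℕ) (x : ℕ) :
    x ∈ n • A ↔ ∃ s : Multiset ℕ, Multiset.card s = n ∧ (∀ a ∈ s, a ∈ A) ∧ s.sum = x := by
  induction n generalizing x with
  | zero =>
    rw [zero_nsmul]
    constructor
    · intro hx
      rw [Finset.mem_zero] at hx
      exact ⟨0, rfl, by simp, by simp [hx]⟩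
    · rintro ⟨s, hc, _, hs⟩
      rw [Multiset.card_eq_zero] at hc
      subst hc
      simp at hs
      simp [Finset.mem_zero, hs.symm]
  | succ n ih =>
    rw [succ_nsmul, Finset.mem_add]
    constructor
    · rintro ⟨y, hy, a, ha, rfl⟩
      obtain ⟨s, hc, hmem, hsum⟩ := (ih y).1 hy
      exact ⟨a ::ₘ s, by simp [hc], by
        intro b hb
        rcases Multiset.mem_cons.1 hb with rfl | hb
        · exact ha
        · exact hmem b hb, by simp [hsum, add_comm]⟩
    · rintro ⟨s, hc, hmem, rfl⟩
      have hne : s ≠ 0 := by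
        intro h; subst h; simp at hc
      obtain ⟨a, ha⟩ := Multiset.exists_mem_of_ne_zero hne
      refine ⟨(s.erase a).sum, (ih _).2 ⟨s.erase a, ?_, ?_, rfl⟩, a, hmem a ha, ?_⟩
      · rw [Multiset.card_erase_of_mem ha, hc]; rfl
      · intro b hb; exact hmem b (Multiset.mem_of_mem_erase hb)
      · conv_rhs => rw [← Multiset.cons_erase ha]
        simp [add_comm]

/-- if `{0, max A} ⊆ B ⊆ A` then `(k+1)A = kA + B` for all
sufficiently large `k`. -/
theorem stmt4 (A B : Finset ℕ) (h0 : (0 : ℕ) ∈ A) (hB0 : (0 : ℕ) ∈ B)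
    (hmax : A.max' ⟨0, h0⟩ ∈ B) (hBA : B ⊆ A) :
    ∃ N : ℕ, ∀ k ≥ N, (k + 1) • A = k • A + B := by
  set m := A.max' ⟨0, h0⟩ with hm
  have hmA : m ∈ A := A.max'_mem _
  refine ⟨m * A.card, fun k hk => ?_⟩
  apply Finset.Subset.antisymm
  · intro x hx
    obtain ⟨s, hc, hmem, rfl⟩ := (mem_nsmul_iff A (k + 1) x).1 hx
    rw [Finset.mem_add]
    by_cases hz : (0 : ℕ) ∈ s
    · refine ⟨(s.erase 0).sum, (mem_nsmul_iff A k _).2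
        ⟨s.erase 0, ?_, fun b hb => hmem b (Multiset.mem_of_mem_erase hb), rfl⟩, 0, hB0, ?_⟩
      · rw [Multiset.card_erase_of_mem hz, hc]; rfl
      · conv_rhs => rw [← Multiset.cons_erase hz]
        simp
    · by_cases hms : m ∈ s
      · refine ⟨(s.erase m).sum, (mem_nsmul_iff A k _).2
          ⟨s.erase m, ?_, fun b hb => hmem b (Multiset.mem_of_mem_erase hb), rfl⟩, m, hmax, ?_⟩
        · rw [Multiset.card_erase_of_mem hms, hc]; rfl
        · conv_rhs => rw [← Multiset.cons_erase hms]
          simp [add_comm]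
      · -- all elements of s are strictly between 0 and m; pigeonhole
        have hsA : ∀ a ∈ s, a ∈ A := hmem
        have hbound : ∀ a ∈ s, 1 ≤ a ∧ a < m := by
          intro a ha
          have h1 : a ≠ 0 := fun h => hz (h ▸ ha)
          have h2 : a ≠ m := fun h => hms (h ▸ ha)
          have h3 : a ≤ m := A.le_max' a (hmem a ha)
          omega
        have hsne : s ≠ 0 := by
          intro h; subst h; simp at hc
        obtain ⟨a0, ha0⟩ := Multiset.exists_mem_of_ne_zero hsne
        have hm1 : 1 ≤ m := by
          have := hbound a0 ha0; omega
        have hpigeon : ∃ a ∈ s, m ≤ s.count a := by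
          by_contra hcon
          push_neg at hcon
          have hsum : Multiset.card s = ∑ a ∈ s.toFinset, s.count a :=
            (Multiset.toFinset_sum_count_eq s).symm
          have hle : ∑ a ∈ s.toFinset, s.count a ≤ ∑ a ∈ s.toFinset, (m - 1) := by
            apply Finset.sum_le_sum
            intro a ha
            have := hcon a (Multiset.mem_toFinset.1 ha)
            omega
          have hcard : s.toFinset.card ≤ A.card :=
            Finset.card_le_card (fun a ha => hmem a (Multiset.mem_toFinset.1 ha))
          rw [Finset.sum_const, smul_eq_mul] at hle
          have : (m - 1) * A.card < m * A.card := by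
            have hA1 : 1 ≤ A.card := Finset.card_pos.2 ⟨0, h0⟩
            calc (m - 1) * A.card < (m - 1) * A.card + A.card := by omega
            _ = ((m - 1) + 1) * A.card := by ring
            _ = m * A.card := by congr 1; omega
          have : Multiset.card s ≤ (m - 1) * A.card := by
            calc Multiset.card s ≤ s.toFinset.card * (m - 1) := by omega
            _ = (m - 1) * s.toFinset.card := by ring
            _ ≤ (m - 1) * A.card := Nat.mul_le_mul_left _ hcard
          omega
        obtain ⟨a, has, hcount⟩ := hpigeon
        have ha1 : 1 ≤ a ∧ a < m := hbound a has
        have hrep : Multiset.replicate m a ≤ s :=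
          Multiset.le_count_iff_replicate_le.1 hcount
        obtain ⟨u, hu⟩ := Multiset.le_iff_exists_add.1 hrep
        have hcardu : m + Multiset.card u = k + 1 := by
          rw [hu] at hc; simpa using hc
        set t : Multiset ℕ := Multiset.replicate a m + Multiset.replicate (m - a - 1) 0 + u
          with ht
        have hcardt : Multiset.card t = k := by
          simp only [ht, Multiset.card_add, Multiset.card_replicate]
          omega
        have hsumt : t.sum = s.sum := by
          rw [ht, hu]
          simp [Multiset.sum_replicate, mul_comm]
        have hmemt : ∀ b ∈ t, b ∈ A := by
          intro b hb
          simp only [ht, Multiset.mem_add] at hb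
          rcases hb with (hb | hb) | hb
          · rw [Multiset.eq_of_mem_replicate hb]; exact hmA
          · rw [Multiset.eq_of_mem_replicate hb]; exact h0
          · exact hmem b (hu ▸ Multiset.mem_add.2 (Or.inr hb))
        exact ⟨s.sum, (mem_nsmul_iff A k _).2 ⟨t, hcardt, hmemt, hsumt⟩, 0, hB0, by simp⟩
  · rw [succ_nsmul]
    exact Finset.add_subset_add_left hBA
end

section
/- If A is a finite subset of ℕ containing 0 with max A = a > 0, then for all sufficiently large k ∈ ℕ, (k+1)A ⊆ kA + {0, a}. -/
open Pointwise

section Aux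

variable {A : Finset ℕ}

lemma zero_mem_nsmul' (h0 : (0:ℕ) ∈ A) : ∀ k : ℕ, (0:ℕ) ∈ k • A := by
  intro k
  induction k with
  | zero => simp [zero_nsmul]
  | succ n ih =>
      rw [succ_nsmul]
      exact Finset.mem_add.2 ⟨0, ih, 0, h0, rfl⟩

lemma add_mem_nsmul' {k l x y : ℕ} (hx : x ∈ k • A) (hy : y ∈ l • A) :
    x + y ∈ (k + l) • A := by
  rw [add_nsmul]
  exact Finset.mem_add.2 ⟨x, hx, y, hy, rfl⟩

lemma nsmul_mul' {x k : ℕ} (hx : x ∈ k • A) : ∀ m : ℕ, m * x ∈ (m * k) • A := by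
  intro m
  induction m with
  | zero => simp [zero_nsmul]
  | succ n ih =>
      have := add_mem_nsmul' ih hx
      rw [Nat.succ_mul, Nat.succ_mul]
      exact this

lemma mul_mem_nsmul' {b : ℕ} (hb : b ∈ A) (m : ℕ) : m * b ∈ m • A := by
  simpa using nsmul_mul' (by simpa [one_nsmul] using hb : b ∈ (1:ℕ) • A) m

lemma nsmul_mono' (h0 : (0:ℕ) ∈ A) {k l : ℕ} (hkl : k ≤ l) : k • A ⊆ l • A := by
  obtain ⟨d, rfl⟩ := Nat.exists_eq_add_of_le hkl
  rw [add_nsmul]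
  intro x hx
  exact Finset.mem_add.2 ⟨x, hx, 0, zero_mem_nsmul' h0 d, by omega⟩

lemma dvd_of_mem_nsmul' {g : ℕ} (hg : ∀ b ∈ A, g ∣ b) :
    ∀ {k x : ℕ}, x ∈ k • A → g ∣ x := by
  intro k
  induction k with
  | zero => intro x hx; simp [zero_nsmul] at hx; simp [show x = 0 from hx]
  | succ n ih =>
      intro x hx
      rw [succ_nsmul] at hx
      obtain ⟨y, hy, z, hz, rfl⟩ := Finset.mem_add.1 hx
      exact Nat.dvd_add (ih hy) (hg z hz)

lemma shrink' (h0 : (0:ℕ) ∈ A) :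
    ∀ {k x : ℕ}, x ∈ k • A → ∃ j ≤ x, x ∈ j • A := by
  intro k
  induction k with
  | zero => intro x hx; exact ⟨0, by simp [zero_nsmul] at hx; omega, hx⟩
  | succ n ih =>
      intro x hx
      rw [succ_nsmul] at hx
      obtain ⟨y, hy, b, hb, rfl⟩ := Finset.mem_add.1 hx
      obtain ⟨j, hj, hyj⟩ := ih hy
      rcases Nat.eq_zero_or_pos b with rfl | hbpos
      · exact ⟨j, by omega, by simpa using hyj⟩
      · refine ⟨j + 1, by omega, ?_⟩
        rw [succ_nsmul]
        exact Finset.mem_add.2 ⟨y, hyj, b, hb, rfl⟩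

/-- membership in the additive closure of `A`, with a witness exponent -/
def InS (A : Finset ℕ) (x : ℕ) : Prop := ∃ k : ℕ, x ∈ k • A

lemma InS_mem {b : ℕ} (hb : b ∈ A) : InS A b := ⟨1, by simpa [one_nsmul] using hb⟩

lemma InS_zero : InS A 0 := ⟨0, by simp [zero_nsmul]⟩

lemma InS_add {x y : ℕ} (hx : InS A x) (hy : InS A y) : InS A (x + y) := by
  obtain ⟨k, hk⟩ := hx; obtain ⟨l, hl⟩ := hy
  exact ⟨k + l, by rw [add_nsmul]; exact Finset.mem_add.2 ⟨x, hk, y, hl, rfl⟩⟩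

lemma InS_mul {x : ℕ} (m : ℕ) (hx : InS A x) : InS A (m * x) := by
  induction m with
  | zero => simpa using (InS_zero : InS A 0)
  | succ n ih => have := InS_add ih hx; rw [Nat.succ_mul]; exact this

/-- Bezout: the gcd of any subset of `A` is a difference of two elements of the
additive closure of `A`. -/
lemma bezout' : ∀ (B : Finset ℕ), B ⊆ A →
    ∃ P Q : ℕ, InS A P ∧ InS A Q ∧ P = B.gcd id + Q := by
  intro B
  induction B using Finset.induction_on with
  | empty => intro _; exact ⟨0, 0, InS_zero, InS_zero, by simp⟩
  | @insert x B hx ih =>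
      intro hsub
      obtain ⟨P, Q, hP, hQ, hPQ⟩ := ih (fun y hy => hsub (Finset.mem_insert_of_mem hy))
      have hxA : x ∈ A := hsub (Finset.mem_insert_self x B)
      set g := B.gcd id with hgdef
      set u := Nat.gcdA x g with hu
      set v := Nat.gcdB x g with hv
      refine ⟨u.toNat * x + v.toNat * P + (-v).toNat * Q,
              (-u).toNat * x + (-v).toNat * P + v.toNat * Q,
              InS_add (InS_add (InS_mul _ (InS_mem hxA)) (InS_mul _ hP)) (InS_mul _ hQ),
              InS_add (InS_add (InS_mul _ (InS_mem hxA)) (InS_mul _ hP)) (InS_mul _ hQ),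
              ?_⟩
      have hb : (Nat.gcd x g : ℤ) = x * u + g * v := Nat.gcd_eq_gcd_ab x g
      have h1 : (u.toNat : ℤ) - (-u).toNat = u := Int.toNat_sub_toNat_neg u
      have h2 : (v.toNat : ℤ) - (-v).toNat = v := Int.toNat_sub_toNat_neg v
      have hPQ' : (P : ℤ) = g + Q := by exact_mod_cast hPQ
      have key : ((u.toNat * x + v.toNat * P + (-v).toNat * Q : ℕ) : ℤ)
          = ((insert x B).gcd id : ℕ) +
            (((-u).toNat * x + (-v).toNat * P + v.toNat * Q : ℕ) : ℤ) := by
        rw [Finset.gcd_insert]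
        show ((u.toNat * x + v.toNat * P + (-v).toNat * Q : ℕ) : ℤ)
          = (Nat.gcd x g : ℤ) + (((-u).toNat * x + (-v).toNat * P + v.toNat * Q : ℕ) : ℤ)
        push_cast
        linear_combination (x : ℤ) * h1 + ((v.toNat : ℤ) - (-v).toNat) * hPQ' + (g : ℤ) * h2 - hb
      exact_mod_cast key

/-- Frobenius-type lemma with length control: every sufficiently large multiple
of the gcd lies in `k • A` as soon as `k` is slightly larger than `z / a`. -/
lemma L1' {a g P Q kP kQ : ℕ} (h0 : (0:ℕ) ∈ A) (haA : a ∈ A) (hapos : 0 < a)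
    (hga : g ∣ a) (hP : P ∈ kP • A) (hQ : Q ∈ kQ • A) (hPQ : P = g + Q) :
    ∀ z k : ℕ, g ∣ z → a * ((a / g) * Q) ≤ z →
      (a / g) * kP + a * ((a / g) * kQ) + z / a ≤ k → z ∈ k • A := by
  intro z k hgz hz1 hz2
  set α := a / g with hα
  have hgpos : 0 < g := by
    rcases Nat.eq_zero_or_pos g with rfl | h
    · exact absurd (Nat.eq_zero_of_zero_dvd hga) (by omega)
    · exact h
  have haga : a = g * α := (Nat.mul_div_cancel' hga).symm
  have hαpos : 0 < α := by
    rcases Nat.eq_zero_or_pos α with h | h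
    · rw [h, Nat.mul_zero] at haga; omega
    · exact h
  set t' := z / g with ht'
  have hzgt : z = g * t' := (Nat.mul_div_cancel' hgz).symm
  set s := t' % α with hs
  set t := t' / α with ht
  have hsα : s < α := Nat.mod_lt _ hαpos
  have ht'dec : t' = α * t + s := by rw [ht, hs]; exact (Nat.div_add_mod t' α).symm
  have hzdec : z = a * t + g * s := by rw [hzgt, ht'dec, haga]; ring
  have htza : t = z / a := by
    rw [ht, ht', haga, Nat.div_div_eq_div_mul]
  obtain ⟨a', rfl⟩ : ∃ a', a = a' + 1 := ⟨a - 1, by omega⟩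
  have he : s * P + a' * (s * Q) = g * s + (a' + 1) * (s * Q) := by
    rw [hPQ]; ring
  have heMem : g * s + (a' + 1) * (s * Q) ∈ (s * kP + a' * (s * kQ)) • A := by
    rw [← he]
    have h1 : s * P ∈ (s * kP) • A := nsmul_mul' hP s
    have h2 : a' * (s * Q) ∈ (a' * (s * kQ)) • A := by
      have := nsmul_mul' (nsmul_mul' hQ s) a'
      simpa [mul_assoc] using this
    exact add_mem_nsmul' h1 h2
  have htq : s * Q ≤ t := by
    have h1 : α * Q ≤ z / (a' + 1) := by
      have := Nat.div_le_div_right (c := a' + 1) hz1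
      rwa [Nat.mul_div_cancel_left _ hapos] at this
    have h2 : s * Q ≤ α * Q := Nat.mul_le_mul_right _ (le_of_lt hsα)
    rw [htza]
    exact le_trans h2 h1
  have hmul : (a' + 1) * (t - s * Q) + (a' + 1) * (s * Q) = (a' + 1) * t := by
    rw [← Nat.mul_add]
    congr 1
    omega
  have hzdec2 : z = (g * s + (a' + 1) * (s * Q)) + (a' + 1) * (t - s * Q) := by
    linarith [hzdec, hmul]
  have hrest : (a' + 1) * (t - s * Q) ∈ (t - s * Q) • A := by
    have := mul_mem_nsmul' haA (t - s * Q)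
    simpa [Nat.mul_comm] using this
  have hmem : z ∈ ((s * kP + a' * (s * kQ)) + (t - s * Q)) • A := by
    rw [hzdec2]; exact add_mem_nsmul' heMem hrest
  refine nsmul_mono' h0 ?_ hmem
  have hsle : s * kP ≤ α * kP := Nat.mul_le_mul_right _ (le_of_lt hsα)
  have hsle2 : a' * (s * kQ) ≤ (a' + 1) * (α * kQ) := by
    have : s * kQ ≤ α * kQ := Nat.mul_le_mul_right _ (le_of_lt hsα)
    nlinarith
  have httt : t - s * Q ≤ z / (a' + 1) := by
    have h1 : t - s * Q ≤ t := Nat.sub_le _ _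
    linarith [htza.le, htza.ge]
  linarith [hz2, hsle, hsle2, httt]

/-- Peeling lemma: an element of `(n+1) • A` either already lies in `n • A`,
or has `a` removable, or is small. -/
lemma L2' {a : ℕ} (hmax : ∀ b ∈ A, b ≤ a) (hapos : 0 < a) :
    ∀ n x : ℕ, x ∈ (n + 1) • A →
      x ∈ n • A ∨ (a ≤ x ∧ x - a ∈ n • A) ∨ x ≤ (n + 1) * (a - 1) := by
  intro n
  induction n with
  | zero =>
      intro x hx
      rw [one_nsmul] at hx
      rcases eq_or_ne x a with rfl | hne
      · exact Or.inr (Or.inl ⟨le_refl _, by simp [zero_nsmul]⟩)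
      · have := hmax x hx
        exact Or.inr (Or.inr (by omega))
  | succ n ih =>
      intro x hx
      rw [succ_nsmul] at hx
      obtain ⟨y, hy, b, hb, rfl⟩ := Finset.mem_add.1 hx
      rcases ih y hy with h | ⟨hay, hya⟩ | hyb
      · left
        rw [succ_nsmul]
        exact Finset.mem_add.2 ⟨y, h, b, hb, rfl⟩
      · right; left
        refine ⟨by omega, ?_⟩
        have : y + b - a = (y - a) + b := by omega
        rw [this, succ_nsmul]
        exact Finset.mem_add.2 ⟨y - a, hya, b, hb, rfl⟩
      · rcases eq_or_ne b a with rfl | hne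
        · right; left
          exact ⟨by omega, by simpa using hy⟩
        · right; right
          have := hmax b hb
          have hb1 : b ≤ a - 1 := by omega
          nlinarith

end Aux

/-- if `0 ∈ A` and `max A = a > 0`, then for all large `k`,
`(k+1)A ⊆ kA + {0, a}`. -/
theorem stmt5 (A : Finset ℕ) (h0 : (0 : ℕ) ∈ A) (a : ℕ)
    (ha : A.max' ⟨0, h0⟩ = a) (hapos : 0 < a) :
    ∃ N : ℕ, ∀ k ≥ N, (k + 1) • A ⊆ k • A + ({0, a} : Finset ℕ) := by
  have hmax : ∀ b ∈ A, b ≤ a := fun b hb => ha ▸ Finset.le_max' A b hb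
  have haA : a ∈ A := ha ▸ A.max'_mem ⟨0, h0⟩
  set g := A.gcd id with hgdef
  have hgdvd : ∀ b ∈ A, g ∣ b := fun b hb => Finset.gcd_dvd hb
  have hga : g ∣ a := hgdvd a haA
  obtain ⟨P, Q, ⟨kP, hP⟩, ⟨kQ, hQ⟩, hPQ⟩ := bezout' (A := A) A (Finset.Subset.refl A)
  set α := a / g with hα
  set C1 := α * kP + a * (α * kQ) with hC1
  set C2 := α * Q with hC2
  refine ⟨a * C2 + a * C1 + C1 + a + 1, ?_⟩
  intro k hk x hx
  have h0mem : (0 : ℕ) ∈ ({0, a} : Finset ℕ) := by simp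
  have hamem : a ∈ ({0, a} : Finset ℕ) := by simp
  rcases L2' hmax hapos k x hx with h | ⟨h1, h2⟩ | h3
  · exact Finset.mem_add.2 ⟨x, h, 0, h0mem, by omega⟩
  · exact Finset.mem_add.2 ⟨x - a, h2, a, hamem, by omega⟩
  · by_cases hxk : x ≤ k
    · obtain ⟨j, hj, hxj⟩ := shrink' h0 hx
      exact Finset.mem_add.2 ⟨x, nsmul_mono' h0 (le_trans hj hxk) hxj, 0, h0mem, by omega⟩
    · push_neg at hxk
      have hgx : g ∣ x := dvd_of_mem_nsmul' hgdvd hx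
      have haC2 : a * C2 ≤ x := by linarith [Nat.zero_le (a * C1), Nat.zero_le C1, Nat.zero_le a]
      have hC1k : C1 ≤ k := by
        have h' : C1 ≤ a * C1 := Nat.le_mul_of_pos_left C1 hapos
        linarith [Nat.zero_le (a * C2), Nat.zero_le a]
      have hdiv : C1 + x / a ≤ k := by
        obtain ⟨k', rfl⟩ := Nat.exists_eq_add_of_le hC1k
        obtain ⟨a', rfl⟩ : ∃ a', a = a' + 1 := ⟨a - 1, by omega⟩
        have h3' : x ≤ (C1 + k' + 1) * a' := by simpa using h3
        have hxlt : x < (k' + 1) * (a' + 1) := by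
          have hk' : (a' + 1) * C1 ≤ k' := by
            linarith [Nat.zero_le ((a' + 1) * C2)]
          nlinarith [h3', hk', Nat.zero_le C1]
        have := (Nat.div_lt_iff_lt_mul hapos).2 hxlt
        omega
      have hxmem : x ∈ k • A := by
        rw [hC1, hα] at hdiv
        exact L1' h0 haA hapos hga hP hQ hPQ x k hgx haC2 hdiv
      exact Finset.mem_add.2 ⟨x, hxmem, 0, h0mem, by omega⟩
end

section
/- If f is a monoid endomorphism of P_fin0(ℕ), then for every X ∈ P_fin0(ℕ), max f(X) = (max X) · (max f({0,1})). -/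
/-!
Taking maxima is a monoid homomorphism `P_fin0(ℕ) → (ℕ, +)`, and the intervals `[0, n]` are the
multiples `n • {0, 1}`, so `max f([0, n]) = n · max f({0, 1})`. Every `X` with `max X = m` is
absorbed by `[0, m]`: `X + [0, m] = [0, 2m]`. Applying `max ∘ f` to this identity gives
`max f(X) + m · c = 2m · c` with `c = max f({0, 1})`, and cancelling yields the claim.
-/

open Pointwise

theorem mem_P0 {X : Finset ℕ} : X ∈ P0 ↔ (0 : ℕ) ∈ X := Iff.rfl

namespace P0

lemma le_mx {X : P0} {a : ℕ} (ha : a ∈ X.1) : a ≤ mx X := Finset.le_max' _ _ ha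

lemma mx_mem (X : P0) : mx X ∈ X.1 := Finset.max'_mem _ _

lemma mx_eq_iff {X : P0} {n : ℕ} : mx X = n ↔ n ∈ X.1 ∧ ∀ a ∈ X.1, a ≤ n :=
  Finset.max'_eq_iff _ _ _

lemma mx_zero : mx 0 = 0 :=
  mx_eq_iff.2 ⟨Finset.mem_zero.2 rfl, fun _ ha => (Finset.mem_zero.1 ha).le⟩

lemma mx_add (X Y : P0) : mx (X + Y) = mx X + mx Y := by
  refine mx_eq_iff.2 ⟨Finset.add_mem_add (mx_mem X) (mx_mem Y), fun a ha => ?_⟩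
  obtain ⟨x, hx, y, hy, rfl⟩ := Finset.mem_add.1 ha
  exact add_le_add (le_mx hx) (le_mx hy)

def mxHom : P0 →+ ℕ where
  toFun := mx
  map_zero' := mx_zero
  map_add' := mx_add

lemma mx_nsmul (n : ℕ) (X : P0) : mx (n • X) = n * mx X :=
  map_nsmul mxHom n X

def Iic (n : ℕ) : P0 := ⟨Finset.Iic n, Finset.mem_Iic.2 n.zero_le⟩

@[simp]
lemma mem_Iic {n a : ℕ} : a ∈ (Iic n).1 ↔ a ≤ n := Finset.mem_Iic

lemma mx_Iic (n : ℕ) : mx (Iic n) = n := mx_eq_iff.2 ⟨by simp, by simp⟩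

lemma Iic_one_eq (h : ({0, 1} : Finset ℕ) ∈ P0) : (⟨{0, 1}, h⟩ : P0) = Iic 1 := rfl

lemma add_Iic_of_mx_le {X : P0} {n : ℕ} (hn : mx X ≤ n + 1) : X + Iic n = Iic (mx X + n) := by
  ext a
  change a ∈ X.1 + Finset.Iic n ↔ a ∈ Finset.Iic (mx X + n)
  simp only [Finset.mem_add, Finset.mem_Iic]
  constructor
  · rintro ⟨x, hx, y, hy, rfl⟩
    exact add_le_add (le_mx hx) hy
  · intro ha
    by_cases hle : a ≤ n
    · exact ⟨0, X.2, a, hle, zero_add a⟩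
    · exact ⟨mx X, mx_mem X, a - mx X, by omega, by omega⟩

lemma nsmul_Iic_one (n : ℕ) : n • Iic 1 = Iic n := by
  induction n with
  | zero => rfl
  | succ n ih =>
    rw [succ_nsmul', ih, add_Iic_of_mx_le (by rw [mx_Iic]; omega), mx_Iic, add_comm]

end P0

/-- for an endomorphism `f` of P_fin0(ℕ),
`max f(X) = max X · max f({0,1})`. -/
theorem stmt8 (f : P0 →+ P0) (X : P0) :
    mx (f X) = mx X * mx (f ⟨({0, 1} : Finset ℕ), by simp [mem_P0]⟩) := by
  rw [P0.Iic_one_eq]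
  have hIic (n : ℕ) : mx (f (P0.Iic n)) = n * mx (f (P0.Iic 1)) := by
    rw [← P0.nsmul_Iic_one, map_nsmul, P0.mx_nsmul]
  have h := congrArg (fun Z => mx (f Z)) (P0.add_Iic_of_mx_le (X := X) (n := mx X) (by omega))
  simp only [map_add, P0.mx_add] at h
  rw [hIic (mx X), hIic (mx X + mx X), add_mul] at h
  omega
end

section
/- For all a, n ∈ ℕ with n ≥ a + 1, the n-fold sumset {0, a, a+1} + {0, a+1, a+2} + ⋯ + {0, a+n−1, a+n} equals {0} ∪ [a, na + n(n+1)/2]. -/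
open Pointwise

theorem my_sum_mem_sum {ι : Type*} (s : Finset ι) (f : ι → ℕ) (A : ι → Finset ℕ)
    (h : ∀ i ∈ s, f i ∈ A i) : (∑ i ∈ s, f i) ∈ ∑ i ∈ s, A i := by
  classical
  induction s using Finset.induction_on with
  | empty => simp
  | @insert x s hx ih =>
    rw [Finset.sum_insert hx, Finset.sum_insert hx]
    exact Finset.add_mem_add (h x (by simp)) (ih fun i hi => h i (by simp [hi]))

theorem zero_mem_sum {ι : Type*} (s : Finset ι) (A : ι → Finset ℕ)
    (h : ∀ i ∈ s, (0:ℕ) ∈ A i) : (0:ℕ) ∈ ∑ i ∈ s, A i := by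
  simpa using my_sum_mem_sum s (fun _ => 0) A h

theorem mem_sum_of_subset {ι : Type*} [DecidableEq ι] {s t : Finset ι} (hst : s ⊆ t)
    (A : ι → Finset ℕ) (h0 : ∀ i ∈ t, (0:ℕ) ∈ A i) {m : ℕ}
    (hm : m ∈ ∑ i ∈ s, A i) : m ∈ ∑ i ∈ t, A i := by
  have heq : t = s ∪ (t \ s) := by rw [Finset.union_sdiff_of_subset hst]
  rw [heq, Finset.sum_union (Finset.disjoint_sdiff)]
  have h0' : (0:ℕ) ∈ ∑ i ∈ t \ s, A i :=
    zero_mem_sum _ _ fun i hi => h0 i (Finset.mem_sdiff.mp hi).1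
  simpa using Finset.add_mem_add hm h0'

theorem key_sum (a j k t : ℕ) (ht : t ≤ k) :
    (∑ i ∈ Finset.Ico j (j+k), (if i < j + t then a + i + 1 else a + i))
      = k * a + (k * j + ∑ i ∈ Finset.range k, i) + t := by
  have h1 : ∀ i : ℕ, (if i < j + t then a + i + 1 else a + i)
      = (a + i) + (if i < j + t then 1 else 0) := by
    intro i; split <;> simp
  simp only [h1, Finset.sum_add_distrib]
  have h2 : (∑ i ∈ Finset.Ico j (j+k), (a + i)) = k * a + (k * j + ∑ i ∈ Finset.range k, i) := by
    rw [Finset.sum_Ico_eq_sum_range]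
    simp only [add_tsub_cancel_left]
    rw [Finset.sum_add_distrib, Finset.sum_const, Finset.sum_add_distrib, Finset.sum_const,
      Finset.card_range]
    ring
  have h3 : (∑ i ∈ Finset.Ico j (j+k), (if i < j + t then (1:ℕ) else 0)) = t := by
    rw [Finset.sum_boole]
    have heq : Finset.filter (fun i => i < j + t) (Finset.Ico j (j+k)) = Finset.Ico j (j+t) := by
      ext i; simp only [Finset.mem_filter, Finset.mem_Ico]; omega
    rw [heq, Nat.card_Ico]
    push_cast
    omega
  rw [h2, h3]

theorem key (a n k j t : ℕ) (hjk : j + k ≤ n) (ht : t ≤ k) :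
    k * a + (k * j + ∑ i ∈ Finset.range k, i) + t
      ∈ ∑ i ∈ Finset.range n, ({0, a + i, a + i + 1} : Finset ℕ) := by
  have hsub : Finset.Ico j (j+k) ⊆ Finset.range n := by
    intro i hi; simp only [Finset.mem_Ico] at hi; simp only [Finset.mem_range]; omega
  apply mem_sum_of_subset hsub _ (fun i _ => by simp)
  rw [← key_sum a j k t ht]
  apply my_sum_mem_sum
  intro i hi
  split <;> simp

theorem upperlem (a n : ℕ) :
    (∑ i ∈ Finset.range n, ({0, a + i, a + i + 1} : Finset ℕ))
      ⊆ insert 0 (Finset.Icc a (∑ i ∈ Finset.range n, (a + i + 1))) := by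
  induction n with
  | zero => intro m hm; simp at hm; simp [hm]
  | succ n ih =>
    intro m hm
    rw [Finset.sum_range_succ, Finset.mem_add] at hm
    obtain ⟨x, hx, y, hy, rfl⟩ := hm
    have hx' := ih hx
    rw [Finset.sum_range_succ]
    simp only [Finset.mem_insert, Finset.mem_singleton, Finset.mem_Icc] at hx' hy ⊢
    omega


/-- for `n ≥ a + 1`,
`∑_{i=0}^{n-1} {0, a+i, a+i+1} = {0} ∪ [a, na + n(n+1)/2]`. -/
theorem stmt16 (a n : ℕ) (h : a + 1 ≤ n) :
    (∑ i ∈ Finset.range n, ({0, a + i, a + i + 1} : Finset ℕ))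
      = insert 0 (Finset.Icc a (n * a + n * (n + 1) / 2)) := by
  classical
  have e2 : (∑ i ∈ Finset.range n, (a + i + 1))
      = n * a + n + ∑ i ∈ Finset.range n, i := by
    rw [Finset.sum_add_distrib, Finset.sum_add_distrib, Finset.sum_const, Finset.sum_const,
      Finset.card_range]
    ring
  have hB : (∑ i ∈ Finset.range n, (a + i + 1)) = n * a + n * (n + 1) / 2 := by
    have hS := Finset.sum_range_id_mul_two n
    have e1 : n * (n+1) = n * (n-1) + 2 * n := by
      rcases n with _ | m
      · simp
      · simp only [Nat.add_sub_cancel]; ring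
    omega
  rw [← hB]
  apply Finset.Subset.antisymm (upperlem a n)
  intro m hm
  rw [Finset.mem_insert] at hm
  rcases hm with rfl | hm
  · exact zero_mem_sum _ _ (fun i _ => by simp)
  rw [Finset.mem_Icc] at hm
  obtain ⟨ham, hmB⟩ := hm
  rw [e2] at hmB
  have hne : ((Finset.Icc 1 n).filter
      (fun k => k * a + ∑ i ∈ Finset.range k, i ≤ m)).Nonempty := by
    refine ⟨1, ?_⟩
    simp only [Finset.mem_filter, Finset.mem_Icc]
    exact ⟨⟨le_refl 1, by omega⟩, by simpa using ham⟩
  obtain ⟨k, hkF, hkmax⟩ : ∃ k, (1 ≤ k ∧ k ≤ n ∧ k * a + ∑ i ∈ Finset.range k, i ≤ m) ∧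
      ∀ x, (1 ≤ x ∧ x ≤ n ∧ x * a + ∑ i ∈ Finset.range x, i ≤ m) → x ≤ k := by
    refine ⟨Finset.max' _ hne, ?_, ?_⟩
    · have := Finset.max'_mem _ hne
      simp only [Finset.mem_filter, Finset.mem_Icc] at this
      exact ⟨this.1.1, this.1.2, this.2⟩
    · intro x hx
      exact Finset.le_max' _ x (by simp only [Finset.mem_filter, Finset.mem_Icc]; exact ⟨⟨hx.1, hx.2.1⟩, hx.2.2⟩)
  obtain ⟨hk1, hkn, hLk⟩ := hkF
  by_cases hcase : k = n
  · -- top block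
    subst hcase
    obtain ⟨r, hrle, hrm⟩ : ∃ r, r ≤ k ∧ m = k * a + (k * 0 + ∑ i ∈ Finset.range k, i) + r :=
      ⟨m - (k * a + ∑ i ∈ Finset.range k, i), by omega, by omega⟩
    rw [hrm]
    exact key a k k 0 r (by omega) hrle
  · have hklt : k < n := lt_of_le_of_ne hkn hcase
    have hU : m < (k+1) * a + ((∑ i ∈ Finset.range k, i) + k) := by
      by_contra hle
      push_neg at hle
      have := hkmax (k+1) ⟨by omega, by omega, by rw [Finset.sum_range_succ]; omega⟩
      omega
    have hka : (k+1) * a = k * a + a := by ring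
    obtain ⟨r, hrdef⟩ : ∃ r, m = k * a + (∑ i ∈ Finset.range k, i) + r :=
      ⟨m - (k * a + ∑ i ∈ Finset.range k, i), by omega⟩
    have hrlt : r < a + k := by omega
    obtain ⟨q, t, hqt, htk⟩ : ∃ q t, k * q + t = r ∧ t < k :=
      ⟨r / k, r % k, Nat.div_add_mod r k, Nat.mod_lt _ (by omega)⟩
    have hqn : q + k ≤ n := by
      by_contra hcon
      push_neg at hcon
      obtain ⟨k', hk'⟩ : ∃ k', k = k' + 1 := ⟨k - 1, by omega⟩
      obtain ⟨d, hd1, hdn⟩ : ∃ d, 1 ≤ d ∧ k + d = n := ⟨n - k, by omega, by omega⟩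
      have h5 : k * (d + 1) ≤ k * q := Nat.mul_le_mul_left k (by omega)
      have h5' : k * (d + 1) = k * d + k := by ring
      have h6 : k' * 1 ≤ k' * d := Nat.mul_le_mul_left k' hd1
      have h7 : k * d = k' * d + d := by rw [hk']; ring
      omega
    have heq : m = k * a + (k * q + ∑ i ∈ Finset.range k, i) + t := by omega
    rw [heq]
    exact key a n k q t (by omega) (by omega)
end
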